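/- Let R be a local commutative Noetherian ring, and let A ⊆ R[x_1,…,x_r] be a t_1-tilted R-subalgebra (not necessarily finitely generated or monomial): there exists ε > 0 such that every monomial x^m with m = (m_1,…,m_r) ∈ ℕ^r, m ≠ 0, and m_2 + ⋯ + m_r ≤ ε·(m_1 + ⋯ + m_r) belongs to A. Let g = (g_1,…,g_n) be a unimodular n-row over A with n ≥ 2, such that the row g|_{x_1=0}, obtained by substituting 0 for x_1, has all entries in R and is a unimodular row over R. Then there exists a unimodular n-row h = (h_1,…,h_n) over A such that g and h lie in the same E_n(A)-orbit and, for each i = 1,…,n, the ideal generated by h_1,…,h_i in R[x_1,…,x_r] is either the unit ideal or has height at least i in R[x_1,…,x_r]. -/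

import Mathlib

/-- A matrix is *elementary* if it differs from the identity matrix in
at most one nonzero off-diagonal entry. -/
def IsElemMat {A : Type*} [CommRing A] {n : ℕ} (E : Matrix (Fin n) (Fin n) A) : Prop :=
  ∃ (i j : Fin n) (c : A), i ≠ j ∧ E = Matrix.transvection i j c

/-- Membership in the elementary group `E_n(A)`: a product of elementary matrices. -/
def IsElementary {A : Type*} [CommRing A] {n : ℕ} (E : Matrix (Fin n) (Fin n) A) : Prop :=
  E ∈ Submonoid.closure { E : Matrix (Fin n) (Fin n) A | IsElemMat E }

/-- A row is unimodular if its entries generate the unit ideal. -/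
def IsUnimodular {A : Type*} [CommRing A] {n : ℕ} (v : Fin n → A) : Prop :=
  Ideal.span (Set.range v) = ⊤

/-- The standard unimodular row `e = (1,0,…,0)`. -/
def stdRow (A : Type*) [CommRing A] (n : ℕ) : Fin n → A := fun i => if i.1 = 0 then 1 else 0

/-- `f` and `g` lie in the same orbit of the right action of `E_n(A)`. -/
def ElemEquiv {A : Type*} [CommRing A] {n : ℕ} (f g : Fin n → A) : Prop :=
  ∃ E : Matrix (Fin n) (Fin n) A, IsElementary E ∧ Matrix.vecMul f E = g

/-- The height of an ideal: the infimum of the heights of the prime ideals containing it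
(equivalently, of the primes minimal over it); the height of the unit ideal is `⊤`. -/
noncomputable def idealHeight {A : Type*} [CommRing A] (I : Ideal A) : ℕ∞ :=
  ⨅ p ∈ { p : PrimeSpectrum A | I ≤ p.asIdeal }, Order.height p

/-- A `t₁`-tilted `R`-subalgebra of `R[x₁,…,x_r]`: all nonzero monomials whose exponent
vectors lie in a suitable neighborhood of the exponent direction of `x₁` belong to `A`. -/
def IsTilted {R : Type*} [CommRing R] {r : ℕ}
    (A : Subalgebra R (MvPolynomial (Fin r) R)) : Prop :=
  ∃ ε : ℝ, 0 < ε ∧ ∀ m : Fin r →₀ ℕ, m ≠ 0 →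
    (∑ j ∈ Finset.univ.filter (fun j : Fin r => (j : ℕ) ≠ 0), (m j : ℝ))
        ≤ ε * ∑ j, (m j : ℝ) →
    MvPolynomial.monomial m (1 : R) ∈ A

/-!
Work modulo `x = x₁`. Tiltedness gives `x₁ ^ (c + 1) * f ∈ A` for every polynomial `f`, and
since `R` is local some entry of `g` is a unit modulo `x₁` with an inverse in `R ⊆ A`. The row is
then fixed entry by entry: the `i`-th entry is first made a unit modulo `x₁` by a transvection,
and then, one minimal prime `q` of `(h₁, …, h_{i-1})` at a time, pushed out of `q` by adding
`h_j · x₁ ^ (c + 1) · β`, where `h_j ∉ q` and `β` lies in the primes already avoided but not in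
`q`; this keeps the entry a unit modulo `x₁`, so `x₁ ∉ q` as the entry lies in `q`. Every
prime containing `(h₁, …, h_i)` then strictly contains a minimal prime of `(h₁, …, h_{i-1})`,
of height `≥ i - 1`.
-/

open MvPolynomial

section ElementaryRows
open scoped Matrix
variable {A : Type*} [CommRing A] {n : ℕ}

theorem ElemEquiv.refl (v : Fin n → A) : ElemEquiv v v :=
  ⟨1, Submonoid.one_mem _, Matrix.vecMul_one v⟩

theorem ElemEquiv.trans {u v w : Fin n → A} (huv : ElemEquiv u v) (hvw : ElemEquiv v w) :
    ElemEquiv u w := by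
  obtain ⟨E, hE, rfl⟩ := huv
  obtain ⟨F, hF, rfl⟩ := hvw
  exact ⟨E * F, Submonoid.mul_mem _ hE hF, (Matrix.vecMul_vecMul _ _ _).symm⟩

theorem vecMul_transvection (v : Fin n → A) {k l : Fin n} (hkl : k ≠ l) (c : A) :
    v ᵥ* Matrix.transvection k l c = Function.update v l (v l + v k * c) := by
  ext j
  rw [Matrix.transvection, Matrix.vecMul_add, Matrix.vecMul_one]
  rcases eq_or_ne j l with rfl | hj
  · simp [Matrix.vecMul, dotProduct, Matrix.single]
  · simp [hj, Ne.symm hj, Matrix.vecMul, dotProduct, Matrix.single]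

theorem elemEquiv_update_add_mul (v : Fin n → A) {k l : Fin n} (hkl : k ≠ l) (c : A) :
    ElemEquiv v (Function.update v l (v l + v k * c)) :=
  ⟨_, Submonoid.subset_closure ⟨k, l, c, hkl, rfl⟩, vecMul_transvection v hkl c⟩

theorem IsElementary.det_eq_one {E : Matrix (Fin n) (Fin n) A} (hE : IsElementary E) :
    E.det = 1 := by
  have : Submonoid.closure {E : Matrix (Fin n) (Fin n) A | IsElemMat E} ≤
      MonoidHom.mker (Matrix.detMonoidHom : Matrix (Fin n) (Fin n) A →* A) :=
    Submonoid.closure_le.2 fun _ ⟨i, j, c, hij, hE⟩ =>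
      hE ▸ Matrix.det_transvection_of_ne i j hij c
  exact this hE

theorem span_range_vecMul_le (v : Fin n → A) (M : Matrix (Fin n) (Fin n) A) :
    Ideal.span (Set.range (v ᵥ* M)) ≤ Ideal.span (Set.range v) := by
  rw [Ideal.span_le]
  rintro _ ⟨j, rfl⟩
  simp only [SetLike.mem_coe, Matrix.vecMul, dotProduct]
  exact Ideal.sum_mem _ fun i _ =>
    Ideal.mul_mem_right (M i j) _ (Ideal.subset_span (Set.mem_range_self i))

theorem IsUnimodular.of_elemEquiv {v w : Fin n → A} (hv : IsUnimodular v)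
    (hvw : ElemEquiv v w) : IsUnimodular w := by
  obtain ⟨E, hE, rfl⟩ := hvw
  have hv_eq : v = (v ᵥ* E) ᵥ* E⁻¹ := by
    rw [Matrix.vecMul_vecMul, Matrix.mul_nonsing_inv _ (by simp [hE.det_eq_one]),
      Matrix.vecMul_one]
  rw [IsUnimodular, eq_top_iff, ← hv]
  conv_lhs => rw [hv_eq]
  exact span_range_vecMul_le _ _

theorem IsUnimodular.map {B : Type*} [CommRing B] (f : A →+* B) {v : Fin n → A}
    (hv : IsUnimodular v) : IsUnimodular (f ∘ v) := by
  rw [IsUnimodular, Set.range_comp, ← Ideal.map_span, hv, Ideal.map_top]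

theorem IsUnimodular.exists_notMem {v : Fin n → A} (hv : IsUnimodular v) {I : Ideal A}
    (hI : I ≠ ⊤) : ∃ j, v j ∉ I := by
  by_contra! h
  exact hI (top_le_iff.1 (hv ▸ Ideal.span_le.2 (Set.range_subset_iff.2 h)))

theorem IsUnimodular.exists_isUnit [IsLocalRing A] {v : Fin n → A} (hv : IsUnimodular v) :
    ∃ j, IsUnit (v j) := by
  simpa using hv.exists_notMem (IsLocalRing.maximalIdeal.isMaximal A).ne_top

end ElementaryRows

section Height
variable {B : Type*} [CommRing B]

theorem add_one_le_idealHeight_sup {I : Ideal B} {b : B} {m : ℕ∞} (hI : m ≤ idealHeight I)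
    (hb : ∀ q ∈ I.minimalPrimes, b ∉ q) : m + 1 ≤ idealHeight (I ⊔ Ideal.span {b}) := by
  refine le_iInf₂ fun p (hp : I ⊔ Ideal.span {b} ≤ p.asIdeal) => ?_
  obtain ⟨q, hq, hqp⟩ := Ideal.exists_minimalPrimes_le (le_sup_left.trans hp)
  have hbp : b ∈ p.asIdeal := hp (Ideal.mem_sup_right (Ideal.mem_span_singleton_self b))
  have hqp_lt : (⟨q, hq.1.1⟩ : PrimeSpectrum B) < p :=
    lt_of_le_of_ne hqp fun h => hb q hq (by rwa [← h] at hbp)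
  calc m + 1 ≤ Order.height (⟨q, hq.1.1⟩ : PrimeSpectrum B) + 1 :=
        add_le_add_left (hI.trans (iInf₂_le (⟨q, hq.1.1⟩ : PrimeSpectrum B) hq.1.2)) 1
    _ ≤ Order.height p := Order.height_add_one_le hqp_lt

variable {n : ℕ}

def initialSpan (v : Fin n → B) (m : ℕ) : Ideal B :=
  Ideal.span (v '' {j | (j : ℕ) < m})

theorem initialSpan_congr {v w : Fin n → B} {m : ℕ} (h : ∀ j : Fin n, (j : ℕ) < m → v j = w j) :
    initialSpan v m = initialSpan w m :=
  congrArg Ideal.span (Set.image_congr h)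

theorem initialSpan_succ (v : Fin n → B) (i : Fin n) :
    initialSpan v (i + 1) = initialSpan v i ⊔ Ideal.span {v i} := by
  have : {j : Fin n | (j : ℕ) < i + 1} = insert i {j : Fin n | (j : ℕ) < i} := by
    ext j; simp [le_iff_eq_or_lt, Fin.ext_iff]
  rw [initialSpan, this, Set.image_insert_eq, Ideal.span_insert, sup_comm, initialSpan]

end Height

theorem Ideal.exists_forall_mem_notMem_of_mem_minimalPrimes {B : Type*} [CommRing B]
    {I q : Ideal B} (hq : q ∈ I.minimalPrimes) {S : Finset (Ideal B)}
    (hS : ∀ q' ∈ S, q' ∈ I.minimalPrimes) (hqS : q ∉ S) :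
    ∃ β, (∀ q' ∈ S, β ∈ q') ∧ β ∉ q := by
  have hnot_le : ¬ S.inf id ≤ q := by
    rw [hq.1.1.inf_le']
    rintro ⟨q', hq', hle⟩
    exact hqS (le_antisymm hle (hq.2 (hS q' hq').1 hle) ▸ hq')
  obtain ⟨β, hβ, hβq⟩ := SetLike.not_le_iff_exists.1 hnot_le
  exact ⟨β, fun q' hq' => Finset.inf_le (f := id) hq' hβ, hβq⟩

section Avoidance
variable {A B : Type*} [CommRing A] [CommRing B] [Algebra A B] {n : ℕ}

variable (A) in
noncomputable def residue (x : B) : A →+* B ⧸ Ideal.span {x} :=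
  (Ideal.Quotient.mk _).comp (algebraMap A B)

theorem algebraMap_notMem_of_isUnit_residue {x : B} {a : A} (ha : IsUnit (residue A x a))
    {q : Ideal B} [q.IsPrime] (hxq : x ∈ q) : algebraMap A B a ∉ q := by
  have hle : Ideal.span {x} ≤ q := (Ideal.span_singleton_le_iff_mem q).2 hxq
  have := (ha.map (Ideal.Quotient.factor hle)).ne_zero
  rwa [residue, RingHom.comp_apply, Ideal.Quotient.factor_mk, Ne,
    Ideal.Quotient.eq_zero_iff_mem] at this

variable {x : B} (hx : ∀ b : B, ∃ c : ℕ, ∃ a : A, algebraMap A B a = x ^ (c + 1) * b)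
include hx

theorem exists_elemEquiv_notMem_finset {I : Ideal B} (S : Finset (Ideal B))
    (hS : ∀ q ∈ S, q ∈ I.minimalPrimes) {v : Fin n → A} (hv : IsUnimodular v) (i : Fin n)
    (hvi : IsUnit (residue A x (v i))) :
    ∃ w, ElemEquiv v w ∧ (∀ j ≠ i, w j = v j) ∧ residue A x (w i) = residue A x (v i) ∧
      ∀ q ∈ S, algebraMap A B (w i) ∉ q := by
  classical
  induction S using Finset.induction_on with
  | empty => exact ⟨v, .refl v, fun _ _ => rfl, rfl, by simp⟩
  | insert q S hqS ih =>
    obtain ⟨w, hvw, hwj, hwi, hwS⟩ := ih fun q' hq' => hS q' (Finset.mem_insert_of_mem hq')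
    have hqmin := hS q (Finset.mem_insert_self q S)
    have hq : q.IsPrime := hqmin.1.1
    by_cases hwq : algebraMap A B (w i) ∉ q
    · exact ⟨w, hvw, hwj, hwi, Finset.forall_mem_insert _ _ _ |>.2 ⟨hwq, hwS⟩⟩
    rw [not_not] at hwq
    have hxq : x ∉ q := fun hxq => algebraMap_notMem_of_isUnit_residue (hwi ▸ hvi) hxq hwq
    obtain ⟨j, hjq⟩ := ((hv.of_elemEquiv hvw).map (algebraMap A B)).exists_notMem
      hq.ne_top
    have hji : j ≠ i := by rintro rfl; exact hjq hwq
    obtain ⟨β, hβS, hβq⟩ := Ideal.exists_forall_mem_notMem_of_mem_minimalPrimes hqmin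
      (fun q' hq' => hS q' (Finset.mem_insert_of_mem hq')) hqS
    obtain ⟨c, l, hl⟩ := hx β
    refine ⟨Function.update w i (w i + w j * l), hvw.trans (elemEquiv_update_add_mul w hji l),
      fun j' hj' => by rw [Function.update_of_ne hj', hwj j' hj'], ?_, ?_⟩
    · have hl0 : residue A x l = 0 := by
        rw [residue, RingHom.comp_apply, hl, Ideal.Quotient.eq_zero_iff_mem,
          Ideal.mem_span_singleton]
        exact Dvd.intro (x ^ c * β) (by ring)
      rw [Function.update_self, map_add, map_mul, hl0, mul_zero, add_zero, hwi]
    · rw [Finset.forall_mem_insert, Function.update_self, map_add, map_mul, hl]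
      refine ⟨fun h => ?_, fun q' hq' h => hwS q' hq' ?_⟩
      · have := (Ideal.add_mem_iff_right q hwq).1 h
        simp only [hq.mul_mem_iff_mem_or_mem] at this
        rcases this with h | h | h
        exacts [hjq h, hxq (hq.mem_of_pow_mem _ h), hβq h]
      · exact (Ideal.add_mem_iff_left q' (Ideal.mul_mem_left _ _ (Ideal.mul_mem_left _ _
          (hβS q' hq')))).1 h

theorem exists_elemEquiv_notMem_minimalPrimes (I : Ideal B) (hI : I.minimalPrimes.Finite)
    {v : Fin n → A} (hv : IsUnimodular v) {k : Fin n} {u : A}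
    (hu : residue A x (v k * u) = 1) (i : Fin n) :
    ∃ w, ElemEquiv v w ∧ (∀ j ≠ i, w j = v j) ∧ residue A x (w k) = residue A x (v k) ∧
      ∀ q ∈ I.minimalPrimes, algebraMap A B (w i) ∉ q := by
  obtain ⟨v', hvv', hv'j, hv'k, hv'i⟩ : ∃ v', ElemEquiv v v' ∧ (∀ j ≠ i, v' j = v j) ∧
      v' k = v k ∧ IsUnit (residue A x (v' i)) := by
    rcases eq_or_ne i k with rfl | hik
    · exact ⟨v, .refl v, fun _ _ => rfl, rfl, IsUnit.of_mul_eq_one _ (by rwa [map_mul] at hu)⟩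
    refine ⟨_, elemEquiv_update_add_mul v hik.symm ((1 - v i) * u),
      fun j hj => Function.update_of_ne hj _ _, Function.update_of_ne hik.symm _ _, ?_⟩
    have h1 : residue A x (v i + v k * ((1 - v i) * u)) = 1 := by
      rw [show v i + v k * ((1 - v i) * u) = v i + v k * u * (1 - v i) by ring, map_add,
        map_mul, hu, map_sub, map_one]
      ring
    simp [h1]
  obtain ⟨w, hv'w, hwj, hwi, hwq⟩ := exists_elemEquiv_notMem_finset hx hI.toFinset
    (fun q hq => hI.mem_toFinset.1 hq) (hv.of_elemEquiv hvv') i hv'i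
  refine ⟨w, hvv'.trans hv'w, fun j hj => (hwj j hj).trans (hv'j j hj), ?_,
    fun q hq => hwq q (hI.mem_toFinset.2 hq)⟩
  rcases eq_or_ne k i with rfl | hki
  · rw [hwi, hv'k]
  · rw [hwj k hki, hv'k]

theorem exists_elemEquiv_le_idealHeight_initialSpan [IsNoetherianRing B] {g : Fin n → A}
    (hg : IsUnimodular g) {k : Fin n} {u : A} (hu : residue A x (g k * u) = 1) :
    ∃ h, ElemEquiv g h ∧
      ∀ m ≤ n, (m : ℕ∞) ≤ idealHeight (initialSpan (algebraMap A B ∘ h) m) := by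
  suffices ∀ i ≤ n, ∃ h, ElemEquiv g h ∧ residue A x (h k) = residue A x (g k) ∧
      ∀ m ≤ i, (m : ℕ∞) ≤ idealHeight (initialSpan (algebraMap A B ∘ h) m) by
    obtain ⟨h, hgh, -, hh⟩ := this n le_rfl
    exact ⟨h, hgh, hh⟩
  intro i
  induction i with
  | zero => exact fun _ => ⟨g, .refl g, rfl, fun m hm => by simp [Nat.le_zero.1 hm]⟩
  | succ i ih =>
    intro hi
    obtain ⟨v, hgv, hvk, hv⟩ := ih (by omega)
    set i' : Fin n := ⟨i, hi⟩
    obtain ⟨w, hvw, hwj, hwk, hwi⟩ := exists_elemEquiv_notMem_minimalPrimes hx (k := k) (u := u)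
      (initialSpan (algebraMap A B ∘ v) i) (Ideal.finite_minimalPrimes_of_isNoetherianRing B _)
      (hg.of_elemEquiv hgv) (by rw [map_mul, hvk, ← map_mul, hu]) i'
    have hinit : ∀ m ≤ i,
        initialSpan (algebraMap A B ∘ w) m = initialSpan (algebraMap A B ∘ v) m :=
      fun m hm => initialSpan_congr fun j hj => by
        rw [Function.comp_apply, hwj j (Fin.ne_of_val_ne (by simp [i']; omega)),
          Function.comp_apply]
    refine ⟨w, hgv.trans hvw, hwk.trans hvk, fun m hm => ?_⟩
    rcases hm.lt_or_eq with hm | rfl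
    · rw [hinit m (Nat.lt_succ_iff.1 hm)]
      exact hv m (Nat.lt_succ_iff.1 hm)
    · rw [show i + 1 = (i' : ℕ) + 1 from rfl, initialSpan_succ, hinit i le_rfl]
      exact_mod_cast add_one_le_idealHeight_sup (hv i le_rfl) hwi

end Avoidance

section Tilted
variable {R : Type*} [CommRing R] {r : ℕ}

theorem sub_aeval_mem_span_X (hr : 0 < r) (f : MvPolynomial (Fin r) R) :
    f - aeval (fun j : Fin r => if (j : ℕ) = 0 then 0 else X j) f ∈
      Ideal.span {X ⟨0, hr⟩} := by
  rw [← Ideal.Quotient.eq]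
  suffices (Ideal.Quotient.mkₐ R (Ideal.span {X ⟨0, hr⟩})).comp (AlgHom.id R _) =
      (Ideal.Quotient.mkₐ R _).comp (aeval fun j : Fin r => if (j : ℕ) = 0 then 0 else X j) from
    DFunLike.congr_fun this f
  refine MvPolynomial.algHom_ext fun j => ?_
  simp only [AlgHom.comp_apply, AlgHom.id_apply, aeval_X]
  split_ifs with hj
  · rw [map_zero, Ideal.Quotient.mkₐ_eq_mk, Ideal.Quotient.eq_zero_iff_mem,
      show j = ⟨0, hr⟩ from Fin.ext hj]
    exact Ideal.mem_span_singleton_self _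
  · rfl

theorem IsTilted.exists_X_pow_mul_mem {A : Subalgebra R (MvPolynomial (Fin r) R)}
    (hA : IsTilted A) (hr : 0 < r) (f : MvPolynomial (Fin r) R) :
    ∃ c : ℕ, X ⟨0, hr⟩ ^ (c + 1) * f ∈ A := by
  obtain ⟨ε, hε, hmem⟩ := hA
  set c := ⌈(f.totalDegree : ℝ) / ε⌉₊
  have hdeg : (f.totalDegree : ℝ) ≤ ε * (c + 1 : ℕ) := by
    rw [← div_le_iff₀' hε]
    exact (Nat.le_ceil _).trans (by push_cast; linarith)
  refine ⟨c, ?_⟩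
  rw [f.as_sum, Finset.mul_sum]
  refine Subalgebra.sum_mem _ fun m hm => ?_
  rw [X_pow_eq_monomial, monomial_mul, one_mul, ← mul_one (coeff m f), ← smul_eq_mul,
    ← smul_monomial]
  set m' := Finsupp.single (⟨0, hr⟩ : Fin r) (c + 1) + m
  have hon : c + 1 ≤ ∑ j, m' j :=
    calc c + 1 ≤ m' ⟨0, hr⟩ := by simp [m']
      _ ≤ ∑ j, m' j := Finset.single_le_sum (fun _ _ => Nat.zero_le _) (Finset.mem_univ _)
  have hoff : ∑ j ∈ Finset.univ.filter (fun j : Fin r => (j : ℕ) ≠ 0), m' j ≤ f.totalDegree :=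
    calc _ = ∑ j ∈ Finset.univ.filter (fun j : Fin r => (j : ℕ) ≠ 0), m j :=
          Finset.sum_congr rfl fun j hj => by
            simp_all [m', Finsupp.single_apply, Fin.ext_iff, eq_comm]
      _ ≤ ∑ j, m j := Finset.sum_le_sum_of_subset (Finset.filter_subset _ _)
      _ ≤ f.totalDegree := by simpa [Finsupp.sum_fintype] using le_totalDegree hm
  refine Subalgebra.smul_mem _ (hmem m' (fun h => ?_) ?_) _
  · simp [h] at hon
  · simp only [← Nat.cast_sum]
    calc _ ≤ (f.totalDegree : ℝ) := by exact_mod_cast hoff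
      _ ≤ ε * (c + 1 : ℕ) := hdeg
      _ ≤ _ := by gcongr

theorem IsTilted.exists_pow_mul_mem_and_sub_aeval_mem
    {A : Subalgebra R (MvPolynomial (Fin r) R)} (hA : IsTilted A) :
    ∃ x : MvPolynomial (Fin r) R,
      (∀ f, ∃ c : ℕ, ∃ a : A, algebraMap A _ a = x ^ (c + 1) * f) ∧
      ∀ f, f - aeval (fun j : Fin r => if (j : ℕ) = 0 then 0 else X j) f ∈ Ideal.span {x} := by
  rcases Nat.eq_zero_or_pos r with rfl | hr
  · -- without variables every polynomial is a constant, so `A` is everything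
    refine ⟨1, fun f => ⟨0, ⟨f, ?_⟩, by simp⟩, fun f => by simp [Ideal.span_singleton_one]⟩
    obtain ⟨a, rfl⟩ := C_surjective (Fin 0) f
    exact A.algebraMap_mem a
  · refine ⟨X ⟨0, hr⟩, fun f => ?_, sub_aeval_mem_span_X hr⟩
    obtain ⟨c, hc⟩ := hA.exists_X_pow_mul_mem hr f
    exact ⟨c, ⟨_, hc⟩, rfl⟩

end Tilted

theorem exists_elemEquiv_row_with_height_condition_tilted_general
    {R : Type*} [CommRing R] [IsNoetherianRing R] [IsLocalRing R]
    {r : ℕ} (A : Subalgebra R (MvPolynomial (Fin r) R)) (hA : IsTilted A)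
    (n : ℕ) (g : Fin n → A) (hg : IsUnimodular g)
    (g₀ : Fin n → R)
    (hg₀ : ∀ i, MvPolynomial.aeval
        (fun j : Fin r => if (j : ℕ) = 0 then 0 else MvPolynomial.X j)
        ((g i : MvPolynomial (Fin r) R)) = MvPolynomial.C (g₀ i))
    (hg₀um : IsUnimodular g₀) :
    ∃ h : Fin n → A, IsUnimodular h ∧ ElemEquiv g h ∧
      ∀ i : ℕ, 1 ≤ i → i ≤ n →
        Ideal.span ((fun j => (h j : MvPolynomial (Fin r) R)) '' { j : Fin n | (j : ℕ) < i }) = ⊤ ∨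
          (i : ℕ∞) ≤ idealHeight
            (Ideal.span ((fun j => (h j : MvPolynomial (Fin r) R)) ''
              { j : Fin n | (j : ℕ) < i })) := by
  obtain ⟨x, hxA, hx⟩ := hA.exists_pow_mul_mem_and_sub_aeval_mem
  obtain ⟨k, hk⟩ := hg₀um.exists_isUnit
  have hu : residue A x (g k * algebraMap R A ↑hk.unit⁻¹) = 1 := by
    have hgk : Ideal.Quotient.mk (Ideal.span {x}) (g k : MvPolynomial (Fin r) R) =
        Ideal.Quotient.mk _ (C (g₀ k)) := by
      rw [Ideal.Quotient.eq, ← hg₀ k]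
      exact hx _
    show Ideal.Quotient.mk _ ((g k : MvPolynomial (Fin r) R) * C (↑hk.unit⁻¹ : R)) = 1
    rw [map_mul, hgk, ← map_mul, ← map_mul, IsUnit.mul_val_inv, map_one, map_one]
  obtain ⟨h, hgh, hh⟩ := exists_elemEquiv_le_idealHeight_initialSpan hxA hg hu
  -- `idealHeight ⊤ = ⊤`, so the height bound also covers the unit ideal
  exact ⟨h, hg.of_elemEquiv hgh, hgh, fun i _ hi => Or.inr (hh i hi)⟩

theorem exists_elemEquiv_row_with_height_condition_tilted
    {R : Type*} [CommRing R] [IsNoetherianRing R] [IsLocalRing R]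
    {r : ℕ} (A : Subalgebra R (MvPolynomial (Fin r) R)) (hA : IsTilted A)
    (n : ℕ) (hn : 2 ≤ n) (g : Fin n → A) (hg : IsUnimodular g)
    (g₀ : Fin n → R)
    (hg₀ : ∀ i, MvPolynomial.aeval
        (fun j : Fin r => if (j : ℕ) = 0 then 0 else MvPolynomial.X j)
        ((g i : MvPolynomial (Fin r) R)) = MvPolynomial.C (g₀ i))
    (hg₀um : IsUnimodular g₀) :
    ∃ h : Fin n → A, IsUnimodular h ∧ ElemEquiv g h ∧
      ∀ i : ℕ, 1 ≤ i → i ≤ n →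
        Ideal.span ((fun j => (h j : MvPolynomial (Fin r) R)) '' { j : Fin n | (j : ℕ) < i }) = ⊤ ∨
          (i : ℕ∞) ≤ idealHeight
            (Ideal.span ((fun j => (h j : MvPolynomial (Fin r) R)) ''
              { j : Fin n | (j : ℕ) < i })) :=
  exists_elemEquiv_row_with_height_condition_tilted_general A hA n g hg g₀ hg₀ hg₀um
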